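/- Let n ≥ 1, let K be a field, let v, w ∈ K, and let X₁,…,Xₙ be nonzero elements of K. Define the n×n matrix B by B_{ij} = (−1)^{i+j} · (∏_{m=1}^{i} X_m⁻¹) · ∑_{l=1}^{j} binom(j−1, l−1) · v^{l} · w^{j−l} · h_{l−1}(X₁⁻¹,…,X_i⁻¹). Then det(B) = v^{n(n+1)/2} · ∏_{i=1}^{n} X_i^{−n}. -/

import Mathlib

/-!
Write `Y m = X m⁻¹`. Up to the row scalings `(-1)^i ∏_{m ≤ i} Y m` and the column signs `(-1)^j`,
the matrix is the product `H * T` with `H i l = h_{l-1}(Y₁, …, Y_i)` and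
`T l j = binom(j-1, l-1) v^l w^(j-l)`, which is upper triangular with diagonal `v^l`.
Since `h_l(Y₁, …, Y_{i+1}) - h_l(Y₁, …, Y_i) = Y_{i+1} h_{l-1}(Y₁, …, Y_{i+1})`, subtracting
from each row of `H` the previous one leaves `e₁` as first column and, after removing the factor
`Y_{i+1}` from row `i + 1`, a minor of the same shape; hence `det H = ∏ Y_i^(i-1)`, and the row
scalings supply the remaining powers `Y_i^(n-i+1)`.
-/

/-- The complete homogeneous symmetric polynomial of degree `k` in the variables given by the
list `l`: the sum of all monomials of total degree `k`. -/
def hh {R : Type*} [CommSemiring R] (k : ℕ) (l : List R) : R :=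
  ∑ a ∈ Finset.Nat.antidiagonalTuple l.length k, ∏ i : Fin l.length, l.get i ^ a i

/-- The list of variables X_a, X_{a+1}, …, X_b (empty if a > b). -/
def seg {R : Type*} (X : ℕ → R) (a b : ℕ) : List R :=
  (List.range (b + 1 - a)).map fun t => X (a + t)

open Finset

theorem Finset.Nat.sum_antidiagonalTuple_succ {M : Type*} [AddCommMonoid M] (k n : ℕ)
    (f : (Fin (k + 1) → ℕ) → M) :
    ∑ a ∈ Nat.antidiagonalTuple (k + 1) n, f a =
      ∑ p ∈ antidiagonal n, ∑ a ∈ Nat.antidiagonalTuple k p.2, f (Fin.cons p.1 a) := by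
  simp only [Finset.sum_eq_multiset_sum]
  change (Multiset.map f (List.Nat.antidiagonalTuple (k + 1) n : Multiset _)).sum =
    (Multiset.map (fun p : ℕ × ℕ => (Multiset.map (fun a => f (Fin.cons p.1 a))
      (List.Nat.antidiagonalTuple k p.2 : Multiset _)).sum)
      (List.Nat.antidiagonal n : Multiset _)).sum
  simp [List.Nat.antidiagonalTuple, List.flatMap, List.sum_flatten, Function.comp_def]

section CompleteHomogeneous

variable {R : Type*} [CommSemiring R]

theorem hh_zero (l : List R) : hh 0 l = 1 := by
  simp [hh, Finset.Nat.antidiagonalTuple_zero_right]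

theorem hh_cons (k : ℕ) (x : R) (t : List R) :
    hh k (x :: t) = ∑ j ∈ range (k + 1), x ^ j * hh (k - j) t := by
  change ∑ a ∈ Nat.antidiagonalTuple (t.length + 1) k, ∏ i : Fin (t.length + 1),
    (x :: t).get i ^ a i = _
  rw [Finset.Nat.sum_antidiagonalTuple_succ,
    Finset.Nat.sum_antidiagonal_eq_sum_range_succ_mk]
  refine sum_congr rfl fun j _ => ?_
  simp [hh, Fin.prod_univ_succ, mul_sum]

theorem hh_succ_cons (k : ℕ) (x : R) (t : List R) :
    hh (k + 1) (x :: t) = hh (k + 1) t + x * hh k (x :: t) := by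
  rw [hh_cons, sum_range_succ', hh_cons, mul_sum, add_comm]
  simp [pow_succ', mul_assoc]

theorem hh_swap (k : ℕ) (x y : R) (t : List R) :
    hh k (x :: y :: t) = hh k (y :: x :: t) := by
  simp only [hh_cons, mul_sum]
  rw [sum_comm' (t' := range (k + 1)) (s' := fun j => range (k - j + 1))
    (fun i j => by simp only [mem_range]; omega)]
  simp only [Nat.sub_right_comm k, mul_left_comm]

theorem hh_perm {l l' : List R} (h : l.Perm l') (k : ℕ) : hh k l = hh k l' := by
  induction h generalizing k with
  | nil => rfl
  | cons x _ ih => simp only [hh_cons, ih]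
  | swap x y t => exact hh_swap k y x t
  | trans _ _ ih₁ ih₂ => rw [ih₁, ih₂]

theorem hh_succ_concat (k : ℕ) (l : List R) (x : R) :
    hh (k + 1) (l ++ [x]) = hh (k + 1) l + x * hh k (l ++ [x]) := by
  simp only [hh_perm (List.perm_append_singleton x l), hh_succ_cons]

end CompleteHomogeneous

theorem seg_succ {α : Type*} (X : ℕ → α) {a b : ℕ} (h : a ≤ b + 1) :
    seg X a (b + 1) = seg X a b ++ [X (b + 1)] := by
  rw [seg, seg, Nat.sub_add_comm h, List.range_succ, List.map_append]
  simp [Nat.add_sub_cancel' h]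

theorem sum_Icc_one_eq_sum_fin {M : Type*} [AddCommMonoid M] {j n : ℕ} (hj : j < n) (g : ℕ → M)
    (hg : ∀ l, j < l → g l = 0) : ∑ l ∈ Icc 1 (j + 1), g (l - 1) = ∑ l : Fin n, g l := by
  rw [← Ico_add_one_right_eq_Icc, sum_Ico_eq_sum_range, Fin.sum_univ_eq_sum_range g]
  simp only [add_tsub_cancel_right, add_tsub_cancel_left]
  exact sum_subset (range_subset_range.2 hj) fun l _ hl => hg l (by simpa using hl)

theorem sum_Icc_choose_mul_hh_eq_sum_fin {R : Type*} [CommSemiring R] (L : List R) (v w : R)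
    {j n : ℕ} (hj : j < n) :
    ∑ l ∈ Icc 1 (j + 1), (j.choose (l - 1) : R) * v ^ l * w ^ (j + 1 - l) * hh (l - 1) L =
      ∑ l : Fin n, hh l L * ((j.choose l : R) * v ^ ((l : ℕ) + 1) * w ^ (j - l)) := by
  rw [← sum_Icc_one_eq_sum_fin hj (fun k => hh k L * ((j.choose k : R) * v ^ (k + 1) * w ^ (j - k)))
    fun l hl => by simp [Nat.choose_eq_zero_of_lt hl]]
  refine sum_congr rfl fun l hl => ?_
  obtain ⟨hl1, -⟩ := mem_Icc.1 hl
  rw [Nat.sub_add_cancel hl1, show j + 1 - l = j - (l - 1) by omega]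
  ring

theorem prod_range_prod_Icc_mul_pow {M : Type*} [CommMonoid M] (Y : ℕ → M) (n : ℕ) :
    ∏ i ∈ range n, ((∏ m ∈ Icc 1 (i + 1), Y m) * Y (i + 1) ^ i) = ∏ m ∈ Icc 1 n, Y m ^ n := by
  induction n with
  | zero => simp
  | succ n ih =>
    rw [prod_range_succ, ih, prod_Icc_succ_top (by omega), prod_Icc_succ_top (by omega)]
    simp only [pow_succ, prod_mul_distrib]
    ac_rfl

namespace Matrix

variable {R : Type*} [CommRing R]

theorem det_of_neg_one_pow_add_mul {ι : Type*} [Fintype ι] [DecidableEq ι] (f : ι → ℕ)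
    (M : Matrix ι ι R) : det (of fun i j => (-1) ^ (f i + f j) * M i j) = det M := by
  have h : (of fun i j => (-1) ^ (f i + f j) * M i j) =
      of fun i j => (-1) ^ f i * (of fun i j => (-1) ^ f j * M i j) i j := by
    ext i j
    simp [pow_add, mul_assoc]
  rw [h, det_mul_column, det_mul_row, ← mul_assoc, ← prod_mul_distrib]
  simp [← mul_pow]

theorem det_of_choose_mul_pow (v w : R) (n : ℕ) :
    det (of fun l j : Fin n => ((j : ℕ).choose l : R) * v ^ ((l : ℕ) + 1) * w ^ ((j : ℕ) - l)) =
      v ^ (n * (n + 1) / 2) := by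
  have hsum : ∑ l : Fin n, ((l : ℕ) + 1) = n * (n + 1) / 2 := by
    rw [Fin.sum_univ_eq_sum_range (· + 1), ← add_zero (∑ i ∈ range n, (i + 1)),
      ← sum_range_succ' (fun i => i), sum_range_id, Nat.add_sub_cancel, mul_comm]
  rw [det_of_isUpperTriangular fun l j (hjl : j < l) => by
    simp [Nat.choose_eq_zero_of_lt (Fin.lt_def.1 hjl)]]
  simp [prod_pow_eq_pow_sum, hsum]

theorem det_hh_of_concat (L : ℕ → List R) (y : ℕ → R) (hL : ∀ i, L (i + 1) = L i ++ [y (i + 1)])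
    (n : ℕ) : det (of fun i j : Fin n => hh j (L i)) = ∏ i : Fin n, y i ^ (i : ℕ) := by
  induction n generalizing L y with
  | zero => simp
  | succ n ih =>
    let B : Matrix (Fin (n + 1)) (Fin (n + 1)) R := of fun i j =>
      Fin.cases (hh j (L 0)) (fun i : Fin n => hh j (L ((i : ℕ) + 1)) - hh j (L i)) i
    have hAB : det (of fun i j : Fin (n + 1) => hh j (L i)) = det B :=
      det_eq_of_forall_row_eq_smul_add_pred (fun _ => 1) (fun _ => rfl)
        fun i j => by simp [B]
    have hB0 : ∀ i : Fin n, B i.succ 0 = 0 := by simp [B, hh_zero]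
    have hminor :
        det (B.submatrix Fin.succ Fin.succ) = ∏ i : Fin n, y ((i : ℕ) + 1) ^ ((i : ℕ) + 1) := by
      have h : B.submatrix Fin.succ Fin.succ = of fun i j : Fin n =>
          y ((i : ℕ) + 1) * (of fun i j : Fin n => hh j (L ((i : ℕ) + 1))) i j := by
        ext i j
        simp [B, hL, hh_succ_concat]
      rw [h, det_mul_column, ih (fun i => L (i + 1)) (fun i => y (i + 1)) fun i => hL (i + 1),
        ← prod_mul_distrib]
      simp [pow_succ']
    rw [hAB, det_succ_column_zero, Fin.sum_univ_succ, sum_eq_zero fun i _ => by rw [hB0]; ring,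
      Fin.succAbove_zero, hminor, Fin.prod_univ_succ]
    simp [B, hh_zero]

end Matrix

/-- Indices `i j : Fin n` stand for the paper's `i + 1`, `j + 1`. -/
theorem stmt14_general {K : Type*} [Field K] (n : ℕ) (v w : K) (X : ℕ → K) :
    Matrix.det (Matrix.of fun i j : Fin n =>
        (-1 : K) ^ (((i : ℕ) + 1) + ((j : ℕ) + 1)) *
          (∏ m ∈ Finset.Icc 1 ((i : ℕ) + 1), (X m)⁻¹) *
            ∑ l ∈ Finset.Icc 1 ((j : ℕ) + 1),
              (Nat.choose (j : ℕ) (l - 1) : K) * v ^ l * w ^ ((j : ℕ) + 1 - l) *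
                hh (l - 1) (seg (fun m => (X m)⁻¹) 1 ((i : ℕ) + 1))) =
      v ^ (n * (n + 1) / 2) * ∏ i ∈ Finset.Icc 1 n, X i ^ (-(n : ℤ)) := by
  set Y : ℕ → K := fun m => (X m)⁻¹
  let H : Matrix (Fin n) (Fin n) K := .of fun i l => hh l (seg Y 1 ((i : ℕ) + 1))
  let T : Matrix (Fin n) (Fin n) K :=
    .of fun l j => ((j : ℕ).choose l : K) * v ^ ((l : ℕ) + 1) * w ^ ((j : ℕ) - l)
  have hdetH : H.det = ∏ i : Fin n, Y ((i : ℕ) + 1) ^ (i : ℕ) :=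
    Matrix.det_hh_of_concat (fun i => seg Y 1 (i + 1)) (fun i => Y (i + 1))
      (fun i => seg_succ Y (b := i + 1) (by omega)) n
  calc _ = Matrix.det (.of fun i j : Fin n => (-1) ^ (((i : ℕ) + 1) + ((j : ℕ) + 1)) *
        (.of fun i j => (∏ m ∈ Icc 1 ((i : ℕ) + 1), Y m) * (H * T) i j :
          Matrix (Fin n) (Fin n) K) i j) := by
        congr 1
        ext i j
        rw [Matrix.of_apply, Matrix.of_apply, Matrix.of_apply, mul_assoc,
          sum_Icc_choose_mul_hh_eq_sum_fin _ _ _ j.isLt]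
        rfl
    _ = (∏ i : Fin n, ∏ m ∈ Icc 1 ((i : ℕ) + 1), Y m) *
          ((∏ i : Fin n, Y ((i : ℕ) + 1) ^ (i : ℕ)) * v ^ (n * (n + 1) / 2)) := by
        rw [Matrix.det_of_neg_one_pow_add_mul (fun i : Fin n => (i : ℕ) + 1), Matrix.det_mul_column,
          Matrix.det_mul, hdetH, Matrix.det_of_choose_mul_pow]
    _ = _ := by
        have hX : ∏ i ∈ Icc 1 n, X i ^ (-(n : ℤ)) = ∏ i ∈ Icc 1 n, Y i ^ n := by
          simp [Y, zpow_neg, inv_pow]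
        rw [hX, ← prod_range_prod_Icc_mul_pow, prod_mul_distrib,
          Fin.prod_univ_eq_prod_range (fun i => ∏ m ∈ Icc 1 (i + 1), Y m),
          Fin.prod_univ_eq_prod_range (fun i => Y (i + 1) ^ i)]
        ring

/-- The determinant evaluation det(B_n) = v^{n(n+1)/2} ∏_i X_i^{−n} of Section 7.4, where
B_{ij} = (−1)^{i+j} (∏_{m=1}^{i} X_m⁻¹) ∑_{l=1}^{j} binom(j−1,l−1) v^l w^{j−l}
h_{l−1}(X₁⁻¹,…,X_i⁻¹). Indices `i j : Fin n` represent the paper's `i+1`, `j+1`. -/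
theorem stmt14 {K : Type*} [Field K] (n : ℕ) (hn : 1 ≤ n) (v w : K) (X : ℕ → K)
    (hX : ∀ i ∈ Finset.Icc 1 n, X i ≠ 0) :
    Matrix.det (Matrix.of fun i j : Fin n =>
        (-1 : K) ^ (((i : ℕ) + 1) + ((j : ℕ) + 1)) *
          (∏ m ∈ Finset.Icc 1 ((i : ℕ) + 1), (X m)⁻¹) *
            ∑ l ∈ Finset.Icc 1 ((j : ℕ) + 1),
              (Nat.choose (j : ℕ) (l - 1) : K) * v ^ l * w ^ ((j : ℕ) + 1 - l) *
                hh (l - 1) (seg (fun m => (X m)⁻¹) 1 ((i : ℕ) + 1))) =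
      v ^ (n * (n + 1) / 2) * ∏ i ∈ Finset.Icc 1 n, X i ^ (-(n : ℤ)) :=
  stmt14_general n v w X
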